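/- Let X and Y be locally compact Hausdorff spaces, let φ : ℂ × ℂ → [0,∞) be a continuous map satisfying (inc), let ρ be either ρ₊ or ρ_max, let A ⊆ C₀(X) and B ⊆ C₀(Y), and let T : A → B be a map satisfying ρ(Tf, Tg) = ρ(f,g) for all f, g ∈ A. Then ‖Tf‖_Y = ‖f‖_X for every f ∈ A. -/

import Mathlib

open scoped ZeroAtInfty Pointwise
open Filter Topology

set_option maxHeartbeats 1000000
set_option synthInstance.maxHeartbeats 1000000

/-- The (inc) property for a two-variable function `φ : ℂ → ℂ → ℝ`. -/
def IncProp (φ : ℂ → ℂ → ℝ) : Prop :=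
  (∀ s₁ s₂ t : ℂ, ‖s₁‖ ≤ ‖s₂‖ →
      φ s₁ t ≤ φ s₂ t ∧ φ t s₁ ≤ φ t s₂) ∧
  (∀ s₁ s₂ t : ℂ, ‖s₁‖ < ‖s₂‖ → t ≠ 0 →
      φ s₁ t < φ s₂ t ∧ φ t s₁ < φ t s₂)

/-- The (con) property. -/
def ConProp (φ : ℂ → ℂ → ℝ) : Prop :=
  ∀ (n : ℕ), 0 < n → ∀ (s : Fin n → ℂ) (t : ℂ),
    φ ((1 / (n : ℂ)) * ∑ i, s i) t ≤ (1 / (n : ℝ)) * ∑ i, φ (s i) t ∧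
    φ t ((1 / (n : ℂ)) * ∑ i, s i) ≤ (1 / (n : ℝ)) * ∑ i, φ t (s i)

/-- sup of φ(f,g) over the space (the supremum norm of the nonnegative function φ(f,g)). -/
noncomputable def supPhi {X : Type*} (φ : ℂ → ℂ → ℝ) (f g : X → ℂ) : ℝ :=
  ⨆ x, φ (f x) (g x)

noncomputable def rhoPlus {X : Type*} (φ : ℂ → ℂ → ℝ) (f g : X → ℂ) : ℝ :=
  supPhi φ f g + supPhi φ g f

noncomputable def rhoMax {X : Type*} (φ : ℂ → ℂ → ℝ) (f g : X → ℂ) : ℝ :=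
  max (supPhi φ f g) (supPhi φ g f)

noncomputable def rhoPlusScalar (φ : ℂ → ℂ → ℝ) (r s : ℂ) : ℝ := φ r s + φ s r

noncomputable def rhoMaxScalar (φ : ℂ → ℂ → ℝ) (r s : ℂ) : ℝ := max (φ r s) (φ s r)

/-- Generic ρ, with a Boolean selecting between ρ₊ (true) and ρ_max (false). -/
noncomputable def rhoGen {X : Type*} (c : Bool) (φ : ℂ → ℂ → ℝ) (f g : X → ℂ) : ℝ :=
  if c then rhoPlus φ f g else rhoMax φ f g

noncomputable def rhoGenScalar (c : Bool) (φ : ℂ → ℂ → ℝ) (r s : ℂ) : ℝ :=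
  if c then rhoPlusScalar φ r s else rhoMaxScalar φ r s

/-- `x₀` is a strong boundary point of `A ⊆ C₀(X)`. -/
def IsStrongBoundaryPoint {X : Type*} [TopologicalSpace X]
    (A : Set C₀(X, ℂ)) (x₀ : X) : Prop :=
  ∀ ε > (0 : ℝ), ∀ V ∈ 𝓝 x₀, ∃ f ∈ A, f x₀ = 1 ∧ ‖f‖ = 1 ∧
    ∀ x ∉ V, ‖f x‖ < ε

/-- V_{x₀}(A). -/
def Vset {X : Type*} [TopologicalSpace X] (A : Set C₀(X, ℂ)) (x₀ : X) : Set C₀(X, ℂ) :=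
  {f ∈ A | f x₀ = 1 ∧ ‖f‖ = 1}

/-- F_{x₀}(A). -/
def Fset {X : Type*} [TopologicalSpace X] (A : Set C₀(X, ℂ)) (x₀ : X) : Set C₀(X, ℂ) :=
  {f ∈ A | ‖f x₀‖ = 1 ∧ ‖f‖ = 1}

/-- The maximum modulus set M(f). -/
def maxSet {X : Type*} [TopologicalSpace X] (f : C₀(X, ℂ)) : Set X :=
  {x | ‖f x‖ = ‖f‖}

noncomputable instance instSeminormedAddCommGroupSubmoduleZeroAtInfty {X : Type*} [TopologicalSpace X]
    (𝒜 : Submodule ℂ C₀(X, ℂ)) : SeminormedAddCommGroup 𝒜 :=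
  Submodule.seminormedAddCommGroup 𝒜

noncomputable instance instSeminormedAddCommGroupStrongDualSubmoduleZeroAtInfty {X : Type*}
    [TopologicalSpace X] (𝒜 : Submodule ℂ C₀(X, ℂ)) : SeminormedAddCommGroup (StrongDual ℂ 𝒜) :=
  @ContinuousLinearMap.toSeminormedAddCommGroup ℂ ℂ 𝒜 ℂ _ _ _ _ _ _ (RingHom.id ℂ) _

/-- Evaluation at a point, as a continuous linear functional on a subspace of C₀(X). -/
noncomputable def evalDual {X : Type*} [TopologicalSpace X]
    (𝒜 : Submodule ℂ C₀(X, ℂ)) (x : X) : StrongDual ℂ 𝒜 :=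
  LinearMap.mkContinuous
    { toFun := fun f => (f : C₀(X, ℂ)) x
      map_add' := fun f g => rfl
      map_smul' := fun c f => rfl }
    1
    (fun f => by
      rw [one_mul, ← Submodule.norm_coe]
      exact ((f : C₀(X, ℂ)).toBCF.norm_coe_le_norm x).trans_eq
        ZeroAtInftyContinuousMap.norm_toBCF_eq_norm)

/-- `x` lies in the Choquet boundary of a subspace `𝒜` of `C₀(X)`: the evaluation functional is
an extreme point of the closed unit ball of the dual space. -/
def InChoquetBoundary {X : Type*} [TopologicalSpace X]
    (𝒜 : Submodule ℂ C₀(X, ℂ)) (x : X) : Prop :=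
  evalDual 𝒜 x ∈
    Set.extremePoints ℝ (Metric.closedBall (0 : StrongDual ℂ 𝒜) 1)

/-- A function algebra on `X`: a closed subalgebra of `C₀(X)` strongly separating points. -/
def IsFunctionAlgebra {X : Type*} [TopologicalSpace X]
    (𝒜 : NonUnitalSubalgebra ℂ C₀(X, ℂ)) : Prop :=
  IsClosed (𝒜 : Set C₀(X, ℂ)) ∧
  (∀ x y : X, x ≠ y → ∃ f ∈ 𝒜, f x ≠ f y) ∧
  (∀ x : X, ∃ g ∈ 𝒜, g x ≠ (0 : ℂ))

/-- `|A| ⊆ |𝒜|`. -/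
def ModulusSubset {X : Type*} [TopologicalSpace X]
    (A 𝒜 : Set C₀(X, ℂ)) : Prop :=
  ∀ f ∈ A, ∃ g ∈ 𝒜, ∀ x, ‖f x‖ = ‖g x‖

/-- The positive elements of a subset `S` of `C₀(X)`. -/
def posPart {X : Type*} [TopologicalSpace X] (S : Set C₀(X, ℂ)) : Set C₀(X, ℂ) :=
  {f ∈ S | ∀ x, ∃ r : ℝ, 0 ≤ r ∧ f x = r}

/-
Along the diagonal, `φ(s, s)` is increasing in `|s|`, strictly so away from `s = 0`, and the
supremum norm of a function vanishing at infinity is attained. Hence `ρ(f, f)` is `φ(‖f‖, ‖f‖)`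
or twice it, and `ρ(Tf, Tf) = ρ(f, f)` forces `‖Tf‖ = ‖f‖`. On an empty space the supremum
is `0` by convention; nonnegativity of `φ` keeps this case in line.
-/

namespace IncProp

variable {φ : ℂ → ℂ → ℝ}

theorem apply_self_le_apply_self (hφ : IncProp φ) {s t : ℂ} (h : ‖s‖ ≤ ‖t‖) :
    φ s s ≤ φ t t :=
  (hφ.1 s t s h).1.trans (hφ.1 s t t h).2

theorem apply_self_lt_apply_self (hφ : IncProp φ) {s t : ℂ} (h : ‖s‖ < ‖t‖) :
    φ s s < φ t t :=
  (hφ.1 s t s h.le).1.trans_lt (hφ.2 s t t h (norm_pos_iff.1 ((norm_nonneg s).trans_lt h))).2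

end IncProp

namespace ZeroAtInftyContinuousMap

variable {X E : Type*} [TopologicalSpace X] [NormedAddCommGroup E]

theorem exists_norm_apply_eq_norm [Nonempty X] (f : C₀(X, E)) : ∃ x, ‖f x‖ = ‖f‖ := by
  obtain ⟨x, hx⟩ : ∃ x, ∀ y, ‖f y‖ ≤ ‖f x‖ := by
    by_cases hf : ∀ y, f y = 0
    · exact ⟨Classical.arbitrary X, fun y => by simp [hf]⟩
    · obtain ⟨x₀, hx₀⟩ := not_forall.1 hf
      have hlim := (zero_at_infty f).norm
      rw [norm_zero] at hlim
      exact (map_continuous f).norm.exists_forall_ge' x₀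
        ((hlim.eventually (gt_mem_nhds (norm_pos_iff.2 hx₀))).mono fun _ => le_of_lt)
  refine ⟨x, le_antisymm ?_ ?_⟩
  · rw [← norm_toBCF_eq_norm]
    exact f.toBCF.norm_coe_le_norm x
  · rw [← norm_toBCF_eq_norm]
    exact (BoundedContinuousFunction.norm_le (norm_nonneg _)).2 hx

end ZeroAtInftyContinuousMap

section SupPhi

variable {X : Type*} [TopologicalSpace X] {φ : ℂ → ℂ → ℝ}

theorem supPhi_self_eq [Nonempty X] (hφ : IncProp φ) (f : C₀(X, ℂ)) :
    supPhi φ f f = φ ‖f‖ ‖f‖ := by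
  have hle : ∀ x, φ (f x) (f x) ≤ φ ‖f‖ ‖f‖ := fun x =>
    hφ.apply_self_le_apply_self (by simpa using f.toBCF.norm_coe_le_norm x)
  obtain ⟨x₀, hx₀⟩ := f.exists_norm_apply_eq_norm
  exact le_antisymm (ciSup_le hle)
    (le_ciSup_of_le ⟨_, Set.forall_mem_range.2 hle⟩ x₀
      (hφ.apply_self_le_apply_self (by simp [hx₀])))

theorem supPhi_self_le (hφ0 : ∀ s t, 0 ≤ φ s t) (hφ : IncProp φ) (f : C₀(X, ℂ)) :
    supPhi φ f f ≤ φ ‖f‖ ‖f‖ := by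
  cases isEmpty_or_nonempty X
  · rw [supPhi, Real.iSup_of_isEmpty]
    exact hφ0 _ _
  · exact (supPhi_self_eq hφ f).le

theorem norm_le_of_supPhi_self_le {Y : Type*} [TopologicalSpace Y] (hφ0 : ∀ s t, 0 ≤ φ s t)
    (hφ : IncProp φ) {f : C₀(X, ℂ)} {g : C₀(Y, ℂ)} (h : supPhi φ f f ≤ supPhi φ g g) :
    ‖f‖ ≤ ‖g‖ := by
  by_contra! hgf
  have : Nonempty X := by
    by_contra hX
    have hf : f = 0 := ZeroAtInftyContinuousMap.ext fun x => (hX ⟨x⟩).elim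
    exact (norm_nonneg g).not_gt (by simpa [hf] using hgf)
  have hlt : φ ‖g‖ ‖g‖ < φ ‖f‖ ‖f‖ := hφ.apply_self_lt_apply_self (by simpa using hgf)
  exact h.not_gt ((supPhi_self_le hφ0 hφ g).trans_lt (hlt.trans_eq (supPhi_self_eq hφ f).symm))

end SupPhi

theorem rhoGen_self {X : Type*} (c : Bool) (φ : ℂ → ℂ → ℝ) (f : X → ℂ) :
    rhoGen c φ f f = cond c 2 1 * supPhi φ f f := by
  cases c <;> simp [rhoGen, rhoPlus, rhoMax, two_mul]

theorem stmt7_general {X Y : Type*} [TopologicalSpace X] [TopologicalSpace Y]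
    (φ : ℂ → ℂ → ℝ)
    (hφ0 : ∀ s t : ℂ, 0 ≤ φ s t) (hinc : IncProp φ) (c : Bool)
    (A : Set C₀(X, ℂ))
    (T : C₀(X, ℂ) → C₀(Y, ℂ))
    (hT : ∀ f ∈ A, ∀ g ∈ A,
      rhoGen c φ (fun y => T f y) (fun y => T g y) =
        rhoGen c φ (fun x => f x) (fun x => g x)) :
    ∀ f ∈ A, ‖T f‖ = ‖f‖ := by
  intro f hf
  have hsup : supPhi φ (T f) (T f) = supPhi φ f f := by
    have hρ := hT f hf f hf
    rw [rhoGen_self, rhoGen_self] at hρ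
    exact mul_left_cancel₀ (by cases c <;> norm_num) hρ
  exact le_antisymm (norm_le_of_supPhi_self_le hφ0 hinc hsup.le)
    (norm_le_of_supPhi_self_le hφ0 hinc hsup.ge)

theorem stmt7 {X Y : Type*} [TopologicalSpace X] [LocallyCompactSpace X] [T2Space X] [TopologicalSpace Y] [LocallyCompactSpace Y] [T2Space Y]
    (φ : ℂ → ℂ → ℝ) (hφc : Continuous fun p : ℂ × ℂ => φ p.1 p.2)
    (hφ0 : ∀ s t : ℂ, 0 ≤ φ s t) (hinc : IncProp φ) (c : Bool)
    (A : Set C₀(X, ℂ)) (B : Set C₀(Y, ℂ))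
    (T : C₀(X, ℂ) → C₀(Y, ℂ)) (hTmaps : Set.MapsTo T A B)
    (hT : ∀ f ∈ A, ∀ g ∈ A,
      rhoGen c φ (fun y => T f y) (fun y => T g y) =
        rhoGen c φ (fun x => f x) (fun x => g x)) :
    ∀ f ∈ A, ‖T f‖ = ‖f‖ :=
  stmt7_general φ hφ0 hinc c A T hT
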